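/- Let 4/3 ≤ r < 2 and fix constants c0,c1,…,c8>0. There exist constants G*, c, C > 0 depending only on r and c0,…,c8 with the following property. Let μ,ν>0, Sc=ν/μ, ε,η>0, κ_η=(η/ν³)^{1/6}, κ_β=(η/μ³)^{1/6}, and let t be a tracer spectrum (2D framework) with shell sums 𝐭, dissipation rate χ and wavenumber κ_θ. Assume hypotheses (i)–(iv) of the first part of Theorem 5.1 hold with constants c1,…,c7 (power-law shell bounds c3χε^{-1/3}κ^{-2/3} ≤ 𝐭_{κ,2κ} ≤ c4χε^{-1/3}κ^{-2/3} on [κg,κf⁻] and c5χη^{-1/3} ≤ 𝐭_{κ,2κ} ≤ c6χη^{-1/3} on [κf⁺,κ_β]; c1κ_η²/ln(κ_η/κf⁺) ≤ η/ε ≤ c2κ_η²/ln(κ_η/κf⁺); 𝐭_{κ0,∞} ≤ c7(𝐭_{κg,κf⁻}+𝐭_{κf⁺,κ_β}); κ0 ≤ κg < κf⁻ ≤ κf⁺ < κ_η, 4κg ≤ κf⁻, 4κf⁺ ≤ κ_β). Assume in addition: κg ≤ c0·κ0; κ_η ≥ 2κf⁺; G ≥ G*; κ_η ≤ c8·κ0·(G·κf⁺/κ0)^{1/4}·(ln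 G)^{1/8}; Sc ≥ 1 and Sc ≥ (G·κf⁺/κ0)^{(3r−4)/(12−6r)}. Then c·κ_β^{r}·κ0^{2−r}/ln(κ_β/κf⁺) ≤ κ_θ² ≤ C·κ_β²/ln(κ_β/κf⁺). (Conclusion (5.9) of Theorem 5.1.) -/

import Mathlib

open Real

/-- Euclidean norm of a lattice vector `k ∈ ℤ^d`. -/
noncomputable def knorm {d : ℕ} (k : Fin d → ℤ) : ℝ :=
  Real.sqrt (∑ i, ((k i : ℝ)) ^ 2)

/-- Shell sum `𝐭_{κ1,κ2}` (finite upper end). -/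
noncomputable def shellSum (d : ℕ) (L κ0 : ℝ) (t : (Fin d → ℤ) → ℝ) (κ1 κ2 : ℝ) : ℝ :=
  L ^ (-(d : ℤ)) * ∑' k : Fin d → ℤ,
    (if κ1 ≤ κ0 * knorm k ∧ κ0 * knorm k < κ2 then t k else 0)

/-- Shell sum `𝐭_{κ1,∞}`. -/
noncomputable def shellSumTop (d : ℕ) (L κ0 : ℝ) (t : (Fin d → ℤ) → ℝ) (κ1 : ℝ) : ℝ :=
  L ^ (-(d : ℤ)) * ∑' k : Fin d → ℤ, (if κ1 ≤ κ0 * knorm k then t k else 0)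

/-- Tracer dissipation rate `χ = μ L^{-d} κ0² Σ_k |k|² t(k)`. -/
noncomputable def chiRate (d : ℕ) (L κ0 μ : ℝ) (t : (Fin d → ℤ) → ℝ) : ℝ :=
  μ * L ^ (-(d : ℤ)) * κ0 ^ 2 * ∑' k : Fin d → ℤ, knorm k ^ 2 * t k

/-- Indicator wavenumber squared, `κ_θ² = κ0² Σ|k|²t(k) / Σ t(k)`. -/
noncomputable def kThetaSq (d : ℕ) (κ0 : ℝ) (t : (Fin d → ℤ) → ℝ) : ℝ :=
  κ0 ^ 2 * (∑' k : Fin d → ℤ, knorm k ^ 2 * t k) / (∑' k : Fin d → ℤ, t k)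

/-- A (discrete) tracer spectrum: nonnegative, vanishing at `k = 0`, not identically
zero, and with `Σ (1+|k|²) t(k) < ∞`. -/
structure IsTracerSpectrum (d : ℕ) (t : (Fin d → ℤ) → ℝ) : Prop where
  nonneg : ∀ k, 0 ≤ t k
  map_zero : t 0 = 0
  exists_ne_zero : ∃ k, t k ≠ 0
  summable : Summable fun k : Fin d → ℤ => (1 + knorm k ^ 2) * t k

/-!
Since `κ_θ² = χ / (μ 𝐭_{κ0,∞})`, both bounds are bounds on the total tracer variance.
Summing the Batchelor-range shell bounds over the `≈ log₂ (κ_β/κ_f⁺)` dyadic shells of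
`[κ_f⁺, κ_β]` gives `𝐭 ≍ χ η^{-1/3} ln (κ_β/κ_f⁺)` up to the inertial-range contribution, which
is a convergent geometric series `≲ χ ε^{-1/3} κ0^{-2/3}`; as `μ η^{-1/3} = κ_β⁻²`, the
Batchelor part alone yields `κ_θ² ≍ κ_β² / ln (κ_β/κ_f⁺)`. The inertial part is controlled by
the bound on `η/ε`, the relation `κ_β = Sc^{1/2} κ_η` and the bound on `κ_η` in terms of `G`:
the assumed lower bound on `Sc` cancels the power of `G κ_f⁺/κ0` exactly, leaving
`(ln G)^{(r-4/3)/8}`, which is `≲ ln (κ_β/κ_f⁺)` because `ln G ≲ ln Sc ≤ 2 ln (κ_β/κ_f⁺)`.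
-/

open Finset

lemma one_le_knorm {d : ℕ} {k : Fin d → ℤ} (hk : k ≠ 0) : 1 ≤ knorm k := by
  obtain ⟨i, hi⟩ : ∃ i, k i ≠ 0 := Function.ne_iff.mp hk
  have hki : (1 : ℝ) ≤ (k i : ℝ) ^ 2 := by
    rw [one_le_sq_iff_one_le_abs]; exact_mod_cast Int.one_le_abs hi
  exact one_le_sqrt.mpr <| hki.trans <|
    single_le_sum (f := fun j => (k j : ℝ) ^ 2) (fun j _ => sq_nonneg _) (mem_univ i)

lemma shellSum_self (d : ℕ) (L κ0 : ℝ) (t : (Fin d → ℤ) → ℝ) (κ1 : ℝ) :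
    shellSum d L κ0 t κ1 κ1 = 0 := by
  have h : ∀ x : ℝ, ¬(κ1 ≤ x ∧ x < κ1) := fun x hx => hx.1.not_gt hx.2
  simp [shellSum, h]

namespace IsTracerSpectrum

variable {d : ℕ} {t : (Fin d → ℤ) → ℝ} (ht : IsTracerSpectrum d t)
include ht

lemma summable_self : Summable t :=
  .of_nonneg_of_le ht.nonneg
    (fun k => le_mul_of_one_le_left (ht.nonneg k) (by nlinarith [sq_nonneg (knorm k)]))
    ht.summable

lemma summable_knorm_sq_mul : Summable fun k => knorm k ^ 2 * t k :=
  .of_nonneg_of_le (fun k => mul_nonneg (sq_nonneg _) (ht.nonneg k))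
    (fun k => mul_le_mul_of_nonneg_right (by linarith) (ht.nonneg k)) ht.summable

lemma ite_nonneg (P : Prop) [Decidable P] (k : Fin d → ℤ) : 0 ≤ if P then t k else 0 := by
  split_ifs
  exacts [ht.nonneg k, le_rfl]

lemma summable_ite (P : (Fin d → ℤ) → Prop) [DecidablePred P] :
    Summable fun k => if P k then t k else 0 :=
  .of_nonneg_of_le (fun k => ht.ite_nonneg (P k) k)
    (fun k => by split_ifs <;> simp [ht.nonneg k]) ht.summable_self

lemma tsum_ite_mono {P Q : (Fin d → ℤ) → Prop} [DecidablePred P] [DecidablePred Q]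
    (hPQ : ∀ k, P k → Q k) :
    (∑' k, if P k then t k else 0) ≤ ∑' k, if Q k then t k else 0 := by
  refine Summable.tsum_le_tsum (fun k => ?_) (ht.summable_ite P) (ht.summable_ite Q)
  by_cases hP : P k
  · simp [hP, hPQ k hP]
  · simpa [hP] using ht.ite_nonneg (Q k) k

variable {L κ0 : ℝ}

lemma shellSum_nonneg (hL : 0 ≤ L) (κ1 κ2 : ℝ) : 0 ≤ shellSum d L κ0 t κ1 κ2 :=
  mul_nonneg (zpow_nonneg hL _) (tsum_nonneg fun k => ht.ite_nonneg _ k)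

lemma shellSum_mono (hL : 0 ≤ L) {κ1 κ2 κ1' κ2' : ℝ} (h1 : κ1' ≤ κ1) (h2 : κ2 ≤ κ2') :
    shellSum d L κ0 t κ1 κ2 ≤ shellSum d L κ0 t κ1' κ2' :=
  mul_le_mul_of_nonneg_left
    (ht.tsum_ite_mono fun _ hk => ⟨h1.trans hk.1, hk.2.trans_le h2⟩) (zpow_nonneg hL _)

lemma shellSum_le_shellSumTop (hL : 0 ≤ L) {κ1 κ2 κ1' : ℝ} (h : κ1' ≤ κ1) :
    shellSum d L κ0 t κ1 κ2 ≤ shellSumTop d L κ0 t κ1' :=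
  mul_le_mul_of_nonneg_left (ht.tsum_ite_mono fun _ hk => h.trans hk.1) (zpow_nonneg hL _)

lemma shellSum_add {κ1 κ2 κ3 : ℝ} (h12 : κ1 ≤ κ2) (h23 : κ2 ≤ κ3) :
    shellSum d L κ0 t κ1 κ2 + shellSum d L κ0 t κ2 κ3 = shellSum d L κ0 t κ1 κ3 := by
  rw [shellSum, shellSum, shellSum, ← mul_add,
    ← (ht.summable_ite _).tsum_add (ht.summable_ite _)]
  congr 1
  refine tsum_congr fun k => ?_
  by_cases hk : κ2 ≤ κ0 * knorm k <;> split_ifs <;> simp_all <;> linarith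

lemma shellSum_eq_sum_dyadic {κ : ℝ} (hκ : 0 ≤ κ) (n : ℕ) :
    shellSum d L κ0 t κ (2 ^ n * κ) =
      ∑ j ∈ range n, shellSum d L κ0 t (2 ^ j * κ) (2 ^ (j + 1) * κ) := by
  induction n with
  | zero => simp [shellSum_self]
  | succ n ih =>
    have hpow : (1 : ℝ) ≤ 2 ^ n := one_le_pow₀ one_le_two
    rw [sum_range_succ, ← ih, ht.shellSum_add (by nlinarith) (by rw [pow_succ]; nlinarith)]

lemma shellSumTop_eq_tsum (hκ0 : 0 ≤ κ0) :
    shellSumTop d L κ0 t κ0 = L ^ (-(d : ℤ)) * ∑' k, t k := by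
  refine congrArg _ (tsum_congr fun k => ?_)
  rcases eq_or_ne k 0 with rfl | hk
  · simp [ht.map_zero]
  · simp [le_mul_of_one_le_right hκ0 (one_le_knorm hk)]

lemma kThetaSq_eq_chiRate_div {μ : ℝ} (hμ : μ ≠ 0) (hL : L ≠ 0) (hκ0 : 0 ≤ κ0) :
    kThetaSq d κ0 t = chiRate d L κ0 μ t / (μ * shellSumTop d L κ0 t κ0) := by
  rw [ht.shellSumTop_eq_tsum hκ0, kThetaSq, chiRate, mul_assoc μ, mul_assoc μ,
    mul_div_mul_left _ _ hμ, mul_assoc, mul_div_mul_left _ _ (zpow_ne_zero _ hL)]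

lemma shellSumTop_pos (hL : 0 < L) (hκ0 : 0 ≤ κ0) : 0 < shellSumTop d L κ0 t κ0 := by
  obtain ⟨k, hk⟩ := ht.exists_ne_zero
  rw [ht.shellSumTop_eq_tsum hκ0]
  exact mul_pos (zpow_pos hL _)
    (ht.summable_self.tsum_pos ht.nonneg k ((ht.nonneg k).lt_of_ne' hk))

lemma chiRate_pos {μ : ℝ} (hμ : 0 < μ) (hL : 0 < L) (hκ0 : κ0 ≠ 0) :
    0 < chiRate d L κ0 μ t := by
  obtain ⟨k, hk⟩ := ht.exists_ne_zero
  have hk0 : k ≠ 0 := by rintro rfl; exact hk ht.map_zero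
  have hknorm : 0 < knorm k := one_pos.trans_le (one_le_knorm hk0)
  have hsum : 0 < ∑' k, knorm k ^ 2 * t k :=
    ht.summable_knorm_sq_mul.tsum_pos (fun k => mul_nonneg (sq_nonneg _) (ht.nonneg k)) k
      (mul_pos (by positivity) ((ht.nonneg k).lt_of_ne' hk))
  unfold chiRate
  positivity

end IsTracerSpectrum

namespace Real

lemma two_pow_floor_logb_le {x : ℝ} (hx : 1 ≤ x) : (2 : ℝ) ^ ⌊logb 2 x⌋₊ ≤ x := by
  rw [← rpow_natCast]
  exact (le_logb_iff_rpow_le one_lt_two (by linarith)).1 (Nat.floor_le (logb_nonneg one_lt_two hx))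

lemma two_pow_lt_of_lt_ceil_logb {x : ℝ} (hx : 0 < x) {j : ℕ} (hj : j < ⌈logb 2 x⌉₊) :
    (2 : ℝ) ^ j < x := by
  rw [← rpow_natCast]
  exact (lt_logb_iff_rpow_lt one_lt_two hx).1 (Nat.lt_ceil.1 hj)

lemma two_le_logb_two_of_four_le {x : ℝ} (hx : 4 ≤ x) : 2 ≤ logb 2 x :=
  (le_logb_iff_rpow_le one_lt_two (by linarith)).2 (by norm_num [hx])

lemma log_div_le_floor_logb_two {x : ℝ} (hx : 4 ≤ x) :
    log x / (2 * log 2) ≤ ⌊logb 2 x⌋₊ := by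
  have h := two_le_logb_two_of_four_le hx
  have := Nat.sub_one_lt_floor (logb 2 x)
  have hlog : log x / (2 * log 2) = logb 2 x / 2 := by rw [logb]; ring
  linarith

lemma ceil_logb_two_le_log_div {x : ℝ} (hx : 4 ≤ x) :
    (⌈logb 2 x⌉₊ : ℝ) ≤ 3 * log x / (2 * log 2) := by
  have h := two_le_logb_two_of_four_le hx
  have := Nat.ceil_lt_add_one (by linarith : 0 ≤ logb 2 x)
  have hlog : 3 * log x / (2 * log 2) = 3 / 2 * logb 2 x := by rw [logb]; ring
  linarith

end Real

namespace IsTracerSpectrum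

variable {d : ℕ} {t : (Fin d → ℤ) → ℝ} (ht : IsTracerSpectrum d t) {L κ0 κ1 κ2 : ℝ}
include ht

lemma natCast_floor_logb_mul_le_shellSum (hL : 0 ≤ L) (hκ1 : 0 < κ1) (h12 : κ1 ≤ κ2) {a : ℝ}
    (ha : ∀ κ, κ1 ≤ κ → κ ≤ κ2 → a ≤ shellSum d L κ0 t κ (2 * κ)) :
    ⌊logb 2 (κ2 / κ1)⌋₊ * a ≤ shellSum d L κ0 t κ1 κ2 := by
  set n := ⌊logb 2 (κ2 / κ1)⌋₊
  have hn : 2 ^ n * κ1 ≤ κ2 :=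
    (le_div_iff₀ hκ1).1 (two_pow_floor_logb_le ((one_le_div hκ1).2 h12))
  have hshell : ∀ j ∈ range n, a ≤ shellSum d L κ0 t (2 ^ j * κ1) (2 ^ (j + 1) * κ1) := by
    intro j hj
    have hj : (2 : ℝ) ^ j ≤ 2 ^ n := pow_le_pow_right₀ one_le_two (mem_range.1 hj).le
    rw [pow_succ', mul_assoc]
    exact ha _ (le_mul_of_one_le_left hκ1.le (one_le_pow₀ one_le_two))
      ((mul_le_mul_of_nonneg_right hj hκ1.le).trans hn)
  calc (n : ℝ) * a = ∑ _j ∈ range n, a := by simp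
    _ ≤ shellSum d L κ0 t κ1 (2 ^ n * κ1) := by
      rw [ht.shellSum_eq_sum_dyadic hκ1.le n]; exact sum_le_sum hshell
    _ ≤ shellSum d L κ0 t κ1 κ2 := ht.shellSum_mono hL le_rfl hn

lemma shellSum_le_sum_ceil_logb (hL : 0 ≤ L) (hκ1 : 0 < κ1) (h12 : κ1 ≤ κ2) {g : ℝ → ℝ}
    (hg : ∀ κ, κ1 ≤ κ → κ ≤ κ2 → shellSum d L κ0 t κ (2 * κ) ≤ g κ) :
    shellSum d L κ0 t κ1 κ2 ≤ ∑ j ∈ range ⌈logb 2 (κ2 / κ1)⌉₊, g (2 ^ j * κ1) := by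
  set m := ⌈logb 2 (κ2 / κ1)⌉₊
  have hx : 0 < κ2 / κ1 := div_pos (hκ1.trans_le h12) hκ1
  have hm : κ2 ≤ 2 ^ m * κ1 := by
    rw [← div_le_iff₀ hκ1, ← rpow_natCast]
    exact (logb_le_iff_le_rpow one_lt_two hx).1 (Nat.le_ceil _)
  calc shellSum d L κ0 t κ1 κ2 ≤ shellSum d L κ0 t κ1 (2 ^ m * κ1) :=
        ht.shellSum_mono hL le_rfl hm
    _ = ∑ j ∈ range m, shellSum d L κ0 t (2 ^ j * κ1) (2 ^ (j + 1) * κ1) :=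
        ht.shellSum_eq_sum_dyadic hκ1.le m
    _ ≤ _ := sum_le_sum fun j hj => by
      rw [pow_succ', mul_assoc]
      exact hg _ (le_mul_of_one_le_left hκ1.le (one_le_pow₀ one_le_two))
        ((lt_div_iff₀ hκ1).1 (two_pow_lt_of_lt_ceil_logb hx (mem_range.1 hj))).le

lemma mul_log_div_le_shellSum (hL : 0 ≤ L) (hκ1 : 0 < κ1) (h4 : 4 * κ1 ≤ κ2) {a : ℝ}
    (ha0 : 0 ≤ a) (ha : ∀ κ, κ1 ≤ κ → κ ≤ κ2 → a ≤ shellSum d L κ0 t κ (2 * κ)) :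
    a * log (κ2 / κ1) / (2 * log 2) ≤ shellSum d L κ0 t κ1 κ2 := by
  have hx : 4 ≤ κ2 / κ1 := (le_div_iff₀ hκ1).2 h4
  calc a * log (κ2 / κ1) / (2 * log 2) = log (κ2 / κ1) / (2 * log 2) * a := by ring
    _ ≤ ⌊logb 2 (κ2 / κ1)⌋₊ * a :=
      mul_le_mul_of_nonneg_right (log_div_le_floor_logb_two hx) ha0
    _ ≤ _ := ht.natCast_floor_logb_mul_le_shellSum hL hκ1 (by linarith) ha

lemma shellSum_le_mul_log_div (hL : 0 ≤ L) (hκ1 : 0 < κ1) (h4 : 4 * κ1 ≤ κ2) {a : ℝ}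
    (ha : ∀ κ, κ1 ≤ κ → κ ≤ κ2 → shellSum d L κ0 t κ (2 * κ) ≤ a) :
    shellSum d L κ0 t κ1 κ2 ≤ 3 * a * log (κ2 / κ1) / (2 * log 2) := by
  have hx : 4 ≤ κ2 / κ1 := (le_div_iff₀ hκ1).2 h4
  have ha0 : 0 ≤ a := (ht.shellSum_nonneg hL _ _).trans (ha κ1 le_rfl (by linarith))
  calc shellSum d L κ0 t κ1 κ2 ≤ ⌈logb 2 (κ2 / κ1)⌉₊ * a := by
        simpa using ht.shellSum_le_sum_ceil_logb hL hκ1 (by linarith) ha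
    _ ≤ 3 * log (κ2 / κ1) / (2 * log 2) * a :=
      mul_le_mul_of_nonneg_right (ceil_logb_two_le_log_div hx) ha0
    _ = 3 * a * log (κ2 / κ1) / (2 * log 2) := by ring

lemma shellSum_le_mul_rpow_div (hL : 0 ≤ L) (hκ1 : 0 < κ1) (h12 : κ1 ≤ κ2) {a p : ℝ} (hp : p < 0)
    (ha : ∀ κ, κ1 ≤ κ → κ ≤ κ2 → shellSum d L κ0 t κ (2 * κ) ≤ a * κ ^ p) :
    shellSum d L κ0 t κ1 κ2 ≤ a * κ1 ^ p / (1 - 2 ^ p) := by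
  have hq0 : (0 : ℝ) < 2 ^ p := rpow_pos_of_pos two_pos p
  have hq1 : (2 : ℝ) ^ p < 1 := rpow_lt_one_of_one_lt_of_neg one_lt_two hp
  have ha0 : 0 ≤ a * κ1 ^ p := (ht.shellSum_nonneg hL _ _).trans (ha κ1 le_rfl h12)
  have hgeom := geom_sum_Ico_le_of_lt_one hq0.le hq1 (m := 0) (n := ⌈logb 2 (κ2 / κ1)⌉₊)
  rw [← range_eq_Ico, pow_zero] at hgeom
  calc shellSum d L κ0 t κ1 κ2 ≤ ∑ j ∈ range ⌈logb 2 (κ2 / κ1)⌉₊, a * (2 ^ j * κ1) ^ p :=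
        ht.shellSum_le_sum_ceil_logb hL hκ1 h12 ha
    _ = a * κ1 ^ p * ∑ j ∈ range ⌈logb 2 (κ2 / κ1)⌉₊, ((2 : ℝ) ^ p) ^ j := by
      rw [mul_sum]
      refine sum_congr rfl fun j _ => ?_
      rw [mul_rpow (by positivity) hκ1.le, ← rpow_natCast, ← rpow_natCast, ← rpow_mul two_pos.le,
        ← rpow_mul two_pos.le, mul_comm p]
      ring
    _ ≤ a * κ1 ^ p / (1 - 2 ^ p) := (mul_le_mul_of_nonneg_left hgeom ha0).trans_eq (by ring)

end IsTracerSpectrum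

namespace Real

lemma rpow_le_one_add_mul {x s : ℝ} (hx : 0 ≤ x) (hs0 : 0 ≤ s) (hs1 : s ≤ 1) :
    x ^ s ≤ 1 + s * x := by
  have h := rpow_one_add_le_one_add_mul_self (by linarith : -1 ≤ x - 1) hs0 hs1
  rw [add_sub_cancel] at h
  nlinarith

lemma rpow_mul_rpow_sub_le {x y r s : ℝ} (hy : 0 ≤ y) (hyx : y ≤ x) (hrs : r ≤ s) (hx : 0 < x) :
    x ^ r * y ^ (s - r) ≤ x ^ s :=
  calc x ^ r * y ^ (s - r) ≤ x ^ r * x ^ (s - r) :=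
        mul_le_mul_of_nonneg_left (rpow_le_rpow hy hyx (by linarith)) (by positivity)
    _ = x ^ s := by rw [← rpow_add hx, add_sub_cancel]

end Real

lemma schmidt_rpow_mul_rpow_le {r Sc X P ℓ c : ℝ} (hr1 : 4 / 3 ≤ r) (hr2 : r < 2) (hP : 0 < P)
    (hX : 0 ≤ X) (hℓ : 0 ≤ ℓ) (hc : 0 ≤ c) (hSc : P ^ ((3 * r - 4) / (12 - 6 * r)) ≤ Sc)
    (hXP : X ≤ c * P ^ (1 / 4 : ℝ) * ℓ ^ (1 / 8 : ℝ)) :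
    Sc ^ ((r - 2) / 2) * X ^ (r - 4 / 3) ≤ c ^ (r - 4 / 3) * ℓ ^ ((r - 4 / 3) / 8) := by
  have hSc' : Sc ^ ((r - 2) / 2) ≤ P ^ (-(r - 4 / 3) / 4) := by
    calc Sc ^ ((r - 2) / 2) ≤ (P ^ ((3 * r - 4) / (12 - 6 * r))) ^ ((r - 2) / 2) :=
          rpow_le_rpow_of_nonpos (by positivity) hSc (by linarith)
      _ = P ^ (-(r - 4 / 3) / 4) := by
          rw [← rpow_mul hP.le, div_mul_div_comm]
          congr 1
          rw [div_eq_div_iff (by nlinarith) (by norm_num)]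
          ring
  have hX' : X ^ (r - 4 / 3) ≤ c ^ (r - 4 / 3) * P ^ ((r - 4 / 3) / 4) * ℓ ^ ((r - 4 / 3) / 8) := by
    calc X ^ (r - 4 / 3) ≤ (c * P ^ (1 / 4 : ℝ) * ℓ ^ (1 / 8 : ℝ)) ^ (r - 4 / 3) :=
          rpow_le_rpow hX hXP (by linarith)
      _ = _ := by
          rw [mul_rpow (by positivity) (by positivity), mul_rpow hc (by positivity),
            ← rpow_mul hP.le, ← rpow_mul hℓ]
          ring_nf
  calc Sc ^ ((r - 2) / 2) * X ^ (r - 4 / 3)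
      ≤ P ^ (-(r - 4 / 3) / 4) *
          (c ^ (r - 4 / 3) * P ^ ((r - 4 / 3) / 4) * ℓ ^ ((r - 4 / 3) / 8)) :=
        mul_le_mul hSc' hX' (by positivity) (by positivity)
    _ = c ^ (r - 4 / 3) * ℓ ^ ((r - 4 / 3) / 8) *
          (P ^ (-(r - 4 / 3) / 4) * P ^ ((r - 4 / 3) / 4)) := by
        ring
    _ = c ^ (r - 4 / 3) * ℓ ^ ((r - 4 / 3) / 8) := by
        rw [← rpow_add hP, neg_div, neg_add_cancel, rpow_zero, mul_one]

lemma rpow_neg_two_eq_of_batchelor {μ η κβ : ℝ} (hμ : 0 < μ) (hη : 0 < η)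
    (hκβ : κβ = (η / μ ^ 3) ^ (1 / 6 : ℝ)) : κβ ^ (-2 : ℝ) = μ * η ^ (-1 / 3 : ℝ) := by
  rw [hκβ, ← rpow_mul (by positivity), show (1 / 6 : ℝ) * (-2) = -1 / 3 by norm_num,
    div_rpow hη.le (by positivity), ← rpow_natCast μ 3, ← rpow_mul hμ.le,
    show ((3 : ℕ) : ℝ) * (-1 / 3) = -1 by norm_num, rpow_neg_one, div_inv_eq_mul, mul_comm]

lemma batchelor_eq_sqrt_mul_kolmogorov {μ ν η κη κβ : ℝ} (hμ : 0 < μ) (hν : 0 < ν) (hη : 0 < η)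
    (hκη : κη = (η / ν ^ 3) ^ (1 / 6 : ℝ)) (hκβ : κβ = (η / μ ^ 3) ^ (1 / 6 : ℝ)) :
    κβ = (ν / μ) ^ (1 / 2 : ℝ) * κη := by
  have hsq : (ν / μ) ^ (1 / 2 : ℝ) = ((ν / μ) ^ 3) ^ (1 / 6 : ℝ) := by
    rw [← rpow_natCast (ν / μ) 3, ← rpow_mul (by positivity)]; norm_num
  rw [hκβ, hκη, hsq, ← mul_rpow (by positivity) (by positivity)]
  congr 1
  field_simp

lemma rpow_mul_rpow_eq_of_schmidt {r Sc κ0 κη κβ : ℝ} (hSc : 0 < Sc) (hκ0 : 0 < κ0) (hκη : 0 < κη)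
    (hκβ : κβ = Sc ^ (1 / 2 : ℝ) * κη) :
    κβ ^ r * κ0 ^ (2 - r) * (κη ^ (2 / 3 : ℝ) * κ0 ^ (-2 / 3 : ℝ)) =
      κβ ^ (2 : ℝ) * (Sc ^ ((r - 2) / 2) * (κη / κ0) ^ (r - 4 / 3)) := by
  rw [hκβ, mul_rpow (by positivity) hκη.le, mul_rpow (by positivity) hκη.le, ← rpow_mul hSc.le,
    ← rpow_mul hSc.le, div_rpow hκη.le hκ0.le]
  simp only [rpow_def_of_pos hSc, rpow_def_of_pos hκη, rpow_def_of_pos hκ0, ← exp_add,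
    ← exp_sub]
  congr 1
  ring

lemma log_rpow_le_mul_log {r G P Sc Λ : ℝ} (hr1 : 4 / 3 ≤ r) (hr2 : r < 2) (hG : 1 ≤ G)
    (hGP : G ≤ P) (hSc : P ^ ((3 * r - 4) / (12 - 6 * r)) ≤ Sc) (hScΛ : log Sc ≤ 2 * Λ)
    (hΛ : log 4 ≤ Λ) :
    log G ^ ((r - 4 / 3) / 8) ≤ (1 / log 4 + (2 - r) / 2) * Λ := by
  set b := (3 * r - 4) / (12 - 6 * r)
  have hb : 0 ≤ b := div_nonneg (by linarith) (by linarith)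
  have hlogG : 0 ≤ log G := log_nonneg hG
  have hlog4 : 0 < log 4 := log_pos (by norm_num)
  have hbG : b * log G ≤ log Sc :=
    calc b * log G ≤ b * log P := mul_le_mul_of_nonneg_left (log_le_log (by linarith) hGP) hb
      _ = log (P ^ b) := (log_rpow (by linarith) b).symm
      _ ≤ log Sc := log_le_log (rpow_pos_of_pos (by linarith) b) hSc
  have hs : (r - 4 / 3) / 8 = (2 - r) / 4 * b := by
    rw [div_mul_div_comm, div_eq_div_iff (by norm_num) (by nlinarith)]; ring
  have hΛ4 : 1 ≤ Λ / log 4 := (one_le_div hlog4).2 hΛ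
  calc log G ^ ((r - 4 / 3) / 8) ≤ 1 + (r - 4 / 3) / 8 * log G :=
        rpow_le_one_add_mul hlogG (by linarith) (by linarith)
    _ = 1 + (2 - r) / 4 * (b * log G) := by rw [hs]; ring
    _ ≤ Λ / log 4 + (2 - r) / 4 * (2 * Λ) :=
        add_le_add hΛ4 (mul_le_mul_of_nonneg_left (hbG.trans hScΛ) (by linarith))
    _ = (1 / log 4 + (2 - r) / 2) * Λ := by ring

lemma rpow_third_le_of_div_le {η ε c κ ℓ : ℝ} (hη : 0 < η) (hε : 0 < ε) (hc : 0 ≤ c) (hκ : 0 ≤ κ)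
    (hℓ : log 2 ≤ ℓ) (h : η / ε ≤ c * κ ^ 2 / ℓ) :
    (η / ε) ^ (1 / 3 : ℝ) ≤ (c / log 2) ^ (1 / 3 : ℝ) * κ ^ (2 / 3 : ℝ) := by
  have hlog2 : 0 < log 2 := log_pos one_lt_two
  have h' : η / ε ≤ c / log 2 * κ ^ 2 :=
    h.trans ((div_le_div_of_nonneg_left (by positivity) hlog2 hℓ).trans_eq (by ring))
  calc (η / ε) ^ (1 / 3 : ℝ) ≤ (c / log 2 * κ ^ 2) ^ (1 / 3 : ℝ) :=
        rpow_le_rpow (by positivity) h' (by norm_num)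
    _ = (c / log 2) ^ (1 / 3 : ℝ) * κ ^ (2 / 3 : ℝ) := by
        rw [mul_rpow (by positivity) (by positivity), ← rpow_natCast κ 2, ← rpow_mul hκ]
        norm_num

theorem inertial_term_le {r c2 c8 μ ν ε η κ0 κfp κη κβ G : ℝ} (hr1 : 4 / 3 ≤ r) (hr2 : r < 2)
    (hc2 : 0 ≤ c2) (hc8 : 0 ≤ c8) (hμ : 0 < μ) (hν : 0 < ν) (hε : 0 < ε) (hη : 0 < η)
    (hκη : κη = (η / ν ^ 3) ^ (1 / 6 : ℝ)) (hκβ : κβ = (η / μ ^ 3) ^ (1 / 6 : ℝ))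
    (hκ0 : 0 < κ0) (h0fp : κ0 ≤ κfp) (h2fp : 2 * κfp ≤ κη) (h4fp : 4 * κfp ≤ κβ)
    (hηε : η / ε ≤ c2 * κη ^ 2 / log (κη / κfp)) (hG : 1 ≤ G)
    (hκηG : κη ≤ c8 * κ0 * (G * κfp / κ0) ^ (1 / 4 : ℝ) * log G ^ (1 / 8 : ℝ))
    (hSc : (G * κfp / κ0) ^ ((3 * r - 4) / (12 - 6 * r)) ≤ ν / μ) :
    κβ ^ r * κ0 ^ (2 - r) * ((η / ε) ^ (1 / 3 : ℝ) * κ0 ^ (-2 / 3 : ℝ)) ≤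
      (c2 / log 2) ^ (1 / 3 : ℝ) * c8 ^ (r - 4 / 3) * (1 / log 4 + (2 - r) / 2) *
        κβ ^ (2 : ℝ) * log (κβ / κfp) := by
  have hκfp : 0 < κfp := hκ0.trans_le h0fp
  have hκη0 : 0 < κη := by linarith
  have hκβ0 : 0 < κβ := by linarith
  have hSc0 : 0 < ν / μ := div_pos hν hμ
  have hκβSc := batchelor_eq_sqrt_mul_kolmogorov hμ hν hη hκη hκβ
  have hScΛ : log (ν / μ) ≤ 2 * log (κβ / κfp) := by
    have h : (ν / μ) ^ (1 / 2 : ℝ) ≤ κβ / κfp := (le_div_iff₀ hκfp).2 <| hκβSc ▸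
      mul_le_mul_of_nonneg_left (by linarith) (by positivity)
    have h := log_le_log (by positivity) h
    rw [log_rpow hSc0] at h
    linarith
  have hratio := rpow_third_le_of_div_le hη hε hc2 hκη0.le
    (log_le_log two_pos ((le_div_iff₀ hκfp).2 h2fp)) hηε
  have hschmidt := schmidt_rpow_mul_rpow_le hr1 hr2 (by positivity) (div_pos hκη0 hκ0).le
    (log_nonneg hG) hc8 hSc ((div_le_iff₀ hκ0).2 (hκηG.trans_eq (by ring)))
  have hlogG := log_rpow_le_mul_log hr1 hr2 hG ((le_div_iff₀ hκ0).2 (by nlinarith)) hSc hScΛ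
    (log_le_log (by norm_num) ((le_div_iff₀ hκfp).2 h4fp))
  calc κβ ^ r * κ0 ^ (2 - r) * ((η / ε) ^ (1 / 3 : ℝ) * κ0 ^ (-2 / 3 : ℝ))
      ≤ κβ ^ r * κ0 ^ (2 - r) *
          ((c2 / log 2) ^ (1 / 3 : ℝ) * κη ^ (2 / 3 : ℝ) * κ0 ^ (-2 / 3 : ℝ)) := by
        gcongr
    _ = (c2 / log 2) ^ (1 / 3 : ℝ) * κβ ^ (2 : ℝ) *
          ((ν / μ) ^ ((r - 2) / 2) * (κη / κ0) ^ (r - 4 / 3)) := by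
        rw [mul_assoc _ (κη ^ _), ← mul_assoc, mul_comm _ ((c2 / log 2) ^ _), mul_assoc,
          rpow_mul_rpow_eq_of_schmidt hSc0 hκ0 hκη0 hκβSc, mul_assoc]
    _ ≤ (c2 / log 2) ^ (1 / 3 : ℝ) * κβ ^ (2 : ℝ) *
          (c8 ^ (r - 4 / 3) * ((1 / log 4 + (2 - r) / 2) * log (κβ / κfp))) := by
        exact mul_le_mul_of_nonneg_left
          (hschmidt.trans (mul_le_mul_of_nonneg_left hlogG (by positivity))) (by positivity)
    _ = _ := by ring

section CascadeBounds

variable {d : ℕ} {t : (Fin d → ℤ) → ℝ} {L κ0 μ η κfp κβ χ : ℝ}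

theorem kThetaSq_le_of_le_shellSum (ht : IsTracerSpectrum d t) (hL : 0 < L) (hμ : 0 < μ)
    (hη : 0 < η) (hκ0 : 0 < κ0) (h0fp : κ0 ≤ κfp) (h4fp : 4 * κfp ≤ κβ)
    (hκβ : κβ = (η / μ ^ 3) ^ (1 / 6 : ℝ)) (hχ : χ = chiRate d L κ0 μ t) {c : ℝ} (hc : 0 < c)
    (hB : ∀ κ, κfp ≤ κ → κ ≤ κβ → c * χ * η ^ (-1 / 3 : ℝ) ≤ shellSum d L κ0 t κ (2 * κ)) :
    kThetaSq d κ0 t ≤ 2 * log 2 / c * κβ ^ (2 : ℝ) / log (κβ / κfp) := by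
  have hκfp : 0 < κfp := hκ0.trans_le h0fp
  have hχ0 : 0 < χ := hχ ▸ ht.chiRate_pos hμ hL hκ0.ne'
  have hΛ : 0 < log (κβ / κfp) := log_pos ((lt_div_iff₀ hκfp).2 (by linarith))
  have hS : c * χ * η ^ (-1 / 3 : ℝ) * log (κβ / κfp) / (2 * log 2) ≤ shellSumTop d L κ0 t κ0 :=
    (ht.mul_log_div_le_shellSum hL.le hκfp h4fp (by positivity) hB).trans
      (ht.shellSum_le_shellSumTop hL.le h0fp)
  rw [ht.kThetaSq_eq_chiRate_div hμ.ne' hL.ne' hκ0.le, ← hχ]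
  calc χ / (μ * shellSumTop d L κ0 t κ0)
      ≤ χ / (μ * (c * χ * η ^ (-1 / 3 : ℝ) * log (κβ / κfp) / (2 * log 2))) :=
        div_le_div_of_nonneg_left hχ0.le (by positivity) (mul_le_mul_of_nonneg_left hS hμ.le)
    _ = 2 * log 2 / c * (μ * η ^ (-1 / 3 : ℝ))⁻¹ / log (κβ / κfp) := by
        field_simp
    _ = 2 * log 2 / c * κβ ^ (2 : ℝ) / log (κβ / κfp) := by
        rw [← rpow_neg_two_eq_of_batchelor hμ hη hκβ, ← rpow_neg (by rw [hκβ]; positivity),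
          neg_neg]

theorem le_kThetaSq_of_shellSum_le (ht : IsTracerSpectrum d t) (hL : 0 < L) (hμ : 0 < μ)
    (hη : 0 < η) {ε κg κfm c4 c6 c7 : ℝ} (hε : 0 < ε) (hκ0 : 0 < κ0) (h0g : κ0 ≤ κg)
    (hgfm : κg ≤ κfm) (hκfp : 0 < κfp) (h4fp : 4 * κfp ≤ κβ)
    (hκβ : κβ = (η / μ ^ 3) ^ (1 / 6 : ℝ)) (hχ : χ = chiRate d L κ0 μ t) (hc4 : 0 ≤ c4)
    (hc7 : 0 ≤ c7)
    (hI : ∀ κ, κg ≤ κ → κ ≤ κfm →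
      shellSum d L κ0 t κ (2 * κ) ≤ c4 * χ * ε ^ (-1 / 3 : ℝ) * κ ^ (-2 / 3 : ℝ))
    (hB : ∀ κ, κfp ≤ κ → κ ≤ κβ → shellSum d L κ0 t κ (2 * κ) ≤ c6 * χ * η ^ (-1 / 3 : ℝ))
    (htop : shellSumTop d L κ0 t κ0 ≤
      c7 * (shellSum d L κ0 t κg κfm + shellSum d L κ0 t κfp κβ)) :
    κβ ^ (2 : ℝ) / (c7 * (c4 / (1 - 2 ^ (-2 / 3 : ℝ)) * ((η / ε) ^ (1 / 3 : ℝ) * κ0 ^ (-2 / 3 : ℝ))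
      + 3 * c6 / (2 * log 2) * log (κβ / κfp))) ≤ kThetaSq d κ0 t := by
  have hχ0 : 0 < χ := hχ ▸ ht.chiRate_pos hμ hL hκ0.ne'
  have hκg : 0 < κg := hκ0.trans_le h0g
  have hq : (2 : ℝ) ^ (-2 / 3 : ℝ) < 1 := rpow_lt_one_of_one_lt_of_neg one_lt_two (by norm_num)
  have hA : shellSum d L κ0 t κg κfm ≤
      c4 * χ * ε ^ (-1 / 3 : ℝ) * κ0 ^ (-2 / 3 : ℝ) / (1 - 2 ^ (-2 / 3 : ℝ)) := by
    refine (ht.shellSum_le_mul_rpow_div hL.le hκg hgfm (by norm_num) hI).trans ?_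
    exact div_le_div_of_nonneg_right (mul_le_mul_of_nonneg_left
      (rpow_le_rpow_of_nonpos hκ0 h0g (by norm_num)) (by positivity)) (by linarith)
  have hB' := ht.shellSum_le_mul_log_div hL.le hκfp h4fp hB
  have hε' : ε ^ (-1 / 3 : ℝ) = η ^ (-1 / 3 : ℝ) * (η / ε) ^ (1 / 3 : ℝ) := by
    rw [div_rpow hη.le hε.le, neg_div, rpow_neg hε.le, rpow_neg hη.le]
    field_simp
  have hμη := rpow_neg_two_eq_of_batchelor hμ hη hκβ
  have hκβ2 : κβ ^ (2 : ℝ) = (μ * η ^ (-1 / 3 : ℝ))⁻¹ := by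
    rw [← hμη, ← rpow_neg (by rw [hκβ]; positivity), neg_neg]
  rw [ht.kThetaSq_eq_chiRate_div hμ.ne' hL.ne' hκ0.le, ← hχ, hκβ2]
  refine le_of_eq_of_le ?_ (div_le_div_of_nonneg_left hχ0.le
    (mul_pos hμ (ht.shellSumTop_pos hL hκ0.le)) (mul_le_mul_of_nonneg_left
      (htop.trans (mul_le_mul_of_nonneg_left (add_le_add hA hB') hc7)) hμ.le))
  rw [hε']
  field_simp

end CascadeBounds

lemma div_le_div_of_mul_le {K Z Λ κ a b c M : ℝ} (ha : 0 < a) (hb : 0 < b) (hc : 0 < c)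
    (hM : 0 < M) (hΛ : 0 < Λ) (hZ : 0 ≤ Z) (hK : K ≤ κ)
    (hKZ : K * Z ≤ M * κ * Λ) :
    1 / (c * (a * M + b)) * K / Λ ≤ κ / (c * (a * Z + b * Λ)) := by
  rw [div_le_div_iff₀ hΛ (by positivity)]
  calc 1 / (c * (a * M + b)) * K * (c * (a * Z + b * Λ))
      = (a * (K * Z) + b * K * Λ) / (a * M + b) := by field_simp
    _ ≤ (a * (M * κ * Λ) + b * κ * Λ) / (a * M + b) := by gcongr
    _ = κ * Λ := by field_simp

theorem tracer_2D_large_Schmidt_wide_cascade_general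
    (r c0 c1 c2 c3 c4 c5 c6 c7 c8 : ℝ)
    (hr1 : 4 / 3 ≤ r) (hr2 : r < 2)
    (hc2 : 0 < c2) (hc4 : 0 < c4)
    (hc5 : 0 < c5) (hc6 : 0 < c6) (hc7 : 0 < c7) (hc8 : 0 < c8) :
    ∃ Gstar c C : ℝ, 0 < Gstar ∧ 0 < c ∧ 0 < C ∧
      ∀ (L μ ν ε η κg κfm κfp κ0 Sc κη κβ χ G : ℝ) (t : (Fin 2 → ℤ) → ℝ),
        0 < L → 0 < μ → 0 < ν → 0 < ε → 0 < η →
        IsTracerSpectrum 2 t →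
        κ0 = 2 * π / L →
        Sc = ν / μ →
        κη = (η / ν ^ 3) ^ (1 / 6 : ℝ) →
        κβ = (η / μ ^ 3) ^ (1 / 6 : ℝ) →
        χ = chiRate 2 L κ0 μ t →
        κ0 ≤ κg → κg < κfm → κfm ≤ κfp → κfp < κη →
        4 * κg ≤ κfm → 4 * κfp ≤ κβ →
        (c1 * κη ^ 2 / Real.log (κη / κfp) ≤ η / ε ∧
          η / ε ≤ c2 * κη ^ 2 / Real.log (κη / κfp)) →
        (∀ κ, κg ≤ κ → κ ≤ κfm →
          c3 * χ * ε ^ (-1 / 3 : ℝ) * κ ^ (-2 / 3 : ℝ) ≤ shellSum 2 L κ0 t κ (2 * κ) ∧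
          shellSum 2 L κ0 t κ (2 * κ) ≤ c4 * χ * ε ^ (-1 / 3 : ℝ) * κ ^ (-2 / 3 : ℝ)) →
        (∀ κ, κfp ≤ κ → κ ≤ κβ →
          c5 * χ * η ^ (-1 / 3 : ℝ) ≤ shellSum 2 L κ0 t κ (2 * κ) ∧
          shellSum 2 L κ0 t κ (2 * κ) ≤ c6 * χ * η ^ (-1 / 3 : ℝ)) →
        shellSumTop 2 L κ0 t κ0 ≤ c7 * (shellSum 2 L κ0 t κg κfm + shellSum 2 L κ0 t κfp κβ) →
        κg ≤ c0 * κ0 →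
        2 * κfp ≤ κη →
        Gstar ≤ G →
        κη ≤ c8 * κ0 * (G * κfp / κ0) ^ (1 / 4 : ℝ) * (Real.log G) ^ (1 / 8 : ℝ) →
        1 ≤ Sc →
        (G * κfp / κ0) ^ ((3 * r - 4) / (12 - 6 * r)) ≤ Sc →
        c * κβ ^ r * κ0 ^ (2 - r) / Real.log (κβ / κfp) ≤ kThetaSq 2 κ0 t ∧
          kThetaSq 2 κ0 t ≤ C * κβ ^ (2 : ℝ) / Real.log (κβ / κfp) := by
  have hq : 0 < 1 - (2 : ℝ) ^ (-2 / 3 : ℝ) :=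
    sub_pos.2 (rpow_lt_one_of_one_lt_of_neg one_lt_two (by norm_num))
  set a := c4 / (1 - (2 : ℝ) ^ (-2 / 3 : ℝ))
  set b := 3 * c6 / (2 * log 2)
  set M := (c2 / log 2) ^ (1 / 3 : ℝ) * c8 ^ (r - 4 / 3) * (1 / log 4 + (2 - r) / 2)
  have ha : 0 < a := by positivity
  have hb : 0 < b := by positivity
  have hM : 0 < M := by have := log_pos (by norm_num : (1 : ℝ) < 4); positivity
  refine ⟨1, 1 / (c7 * (a * M + b)), 2 * log 2 / c5, one_pos, by positivity, by positivity, ?_⟩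
  intro L μ ν ε η κg κfm κfp κ0 Sc κη κβ χ G t hL hμ hν hε hη ht hκ0 hSc hκη hκβ hχ h0g hgfm
    hfmfp _ _ h4fp ⟨_, hηε⟩ hI hB htop _ h2fp hG hκηG _ hScG
  have hκ0pos : 0 < κ0 := hκ0 ▸ by positivity
  have h0fp : κ0 ≤ κfp := by linarith
  have hκfp : 0 < κfp := hκ0pos.trans_le h0fp
  have hκβ0 : 0 < κβ := by linarith
  have hΛ : 0 < log (κβ / κfp) := log_pos ((lt_div_iff₀ hκfp).2 (by linarith))
  subst hSc
  refine ⟨?_, kThetaSq_le_of_le_shellSum ht hL hμ hη hκ0pos h0fp h4fp hκβ hχ hc5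
    fun κ h1 h2 => (hB κ h1 h2).1⟩
  rw [mul_assoc _ (κβ ^ r)]
  refine (div_le_div_of_mul_le ha hb hc7 hM hΛ (by positivity)
    (rpow_mul_rpow_sub_le hκ0pos.le (by linarith) hr2.le hκβ0)
    (inertial_term_le hr1 hr2 hc2.le hc8.le hμ hν hε hη hκη hκβ hκ0pos h0fp h2fp h4fp hηε hG hκηG
      hScG)).trans ?_
  exact le_kThetaSq_of_shellSum_le ht hL hμ hη hε hκ0pos h0g hgfm.le hκfp h4fp hκβ hχ hc4.le hc7.le
    (fun κ h1 h2 => (hI κ h1 h2).2) (fun κ h1 h2 => (hB κ h1 h2).2) htop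

/-- Theorem 5.1 (conclusion (5.9)): 2D, large Schmidt number, wide tracer cascade. -/
theorem tracer_2D_large_Schmidt_wide_cascade
    (r c0 c1 c2 c3 c4 c5 c6 c7 c8 : ℝ)
    (hr1 : 4 / 3 ≤ r) (hr2 : r < 2)
    (hc0 : 0 < c0) (hc1 : 0 < c1) (hc2 : 0 < c2) (hc3 : 0 < c3) (hc4 : 0 < c4)
    (hc5 : 0 < c5) (hc6 : 0 < c6) (hc7 : 0 < c7) (hc8 : 0 < c8) :
    ∃ Gstar c C : ℝ, 0 < Gstar ∧ 0 < c ∧ 0 < C ∧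
      ∀ (L μ ν ε η κg κfm κfp κ0 Sc κη κβ χ G : ℝ) (t : (Fin 2 → ℤ) → ℝ),
        0 < L → 0 < μ → 0 < ν → 0 < ε → 0 < η →
        IsTracerSpectrum 2 t →
        κ0 = 2 * π / L →
        Sc = ν / μ →
        κη = (η / ν ^ 3) ^ (1 / 6 : ℝ) →
        κβ = (η / μ ^ 3) ^ (1 / 6 : ℝ) →
        χ = chiRate 2 L κ0 μ t →
        κ0 ≤ κg → κg < κfm → κfm ≤ κfp → κfp < κη →
        4 * κg ≤ κfm → 4 * κfp ≤ κβ →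
        (c1 * κη ^ 2 / Real.log (κη / κfp) ≤ η / ε ∧
          η / ε ≤ c2 * κη ^ 2 / Real.log (κη / κfp)) →
        (∀ κ, κg ≤ κ → κ ≤ κfm →
          c3 * χ * ε ^ (-1 / 3 : ℝ) * κ ^ (-2 / 3 : ℝ) ≤ shellSum 2 L κ0 t κ (2 * κ) ∧
          shellSum 2 L κ0 t κ (2 * κ) ≤ c4 * χ * ε ^ (-1 / 3 : ℝ) * κ ^ (-2 / 3 : ℝ)) →
        (∀ κ, κfp ≤ κ → κ ≤ κβ →
          c5 * χ * η ^ (-1 / 3 : ℝ) ≤ shellSum 2 L κ0 t κ (2 * κ) ∧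
          shellSum 2 L κ0 t κ (2 * κ) ≤ c6 * χ * η ^ (-1 / 3 : ℝ)) →
        shellSumTop 2 L κ0 t κ0 ≤ c7 * (shellSum 2 L κ0 t κg κfm + shellSum 2 L κ0 t κfp κβ) →
        κg ≤ c0 * κ0 →
        2 * κfp ≤ κη →
        Gstar ≤ G →
        κη ≤ c8 * κ0 * (G * κfp / κ0) ^ (1 / 4 : ℝ) * (Real.log G) ^ (1 / 8 : ℝ) →
        1 ≤ Sc →
        (G * κfp / κ0) ^ ((3 * r - 4) / (12 - 6 * r)) ≤ Sc →
        c * κβ ^ r * κ0 ^ (2 - r) / Real.log (κβ / κfp) ≤ kThetaSq 2 κ0 t ∧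
          kThetaSq 2 κ0 t ≤ C * κβ ^ (2 : ℝ) / Real.log (κβ / κfp) :=
  tracer_2D_large_Schmidt_wide_cascade_general r c0 c1 c2 c3 c4 c5 c6 c7 c8 hr1 hr2 hc2 hc4 hc5 hc6
    hc7 hc8
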